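/- arXiv:2604.26443 — 8 statements merged into one kernel-verified Lean document; each statement's English description precedes it below -/
import Mathlib

section
/- Let Q be a pseudo-renewal row-stochastic transition matrix on a nonempty finite set Ω with constants (β_ω)_{ω∈Ω}, invariant belief μ, and set α = 1 − Σ_ω β_ω. Let M be a nonempty finite set, λ ∈ Δ(M), and (p_m)_{m∈M} a collection of beliefs on Ω with Σ_m λ(m)·p_m = μ. Then for every m ∈ M, p_m Q = Σ_{r∈M} (α·1{r=m} + (1−α)·λ(r))·p_r; the coefficients are nonnegative and sum to 1, so in particular p_m Q lies in the convex hull of {p_r : r ∈ M} (the M-absorbing property). -/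
/-- For a pseudo-renewal row-stochastic transition matrix `Q`
(with `Q ω' ω = Q(ω' ∣ ω)`) with constants `β`, invariant belief `μ`,
`α = 1 - ∑ ω, β ω`, a marginal `lam ∈ Δ(M)` and beliefs `(p m)` with
`∑ m, lam m • p m = μ`, for every `m`:
`p_m Q = ∑ r, (α·1{r=m} + (1-α)·lam r) • p r`, the coefficients are
nonnegative and sum to `1`, and so `p_m Q` lies in the convex hull of
`{p r : r ∈ M}` (the `M`-absorbing property). -/
theorem stmt2 {Ω : Type*} {M : Type*} [Fintype Ω] [Nonempty Ω]
    [Fintype M] [Nonempty M] [DecidableEq M]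
    (Q : Ω → Ω → ℝ) (β : Ω → ℝ)
    (hQnn : ∀ ω' ω, 0 ≤ Q ω' ω)
    (hQrow : ∀ ω, ∑ ω', Q ω' ω = 1)
    (hβnn : ∀ ω, 0 ≤ β ω) (hβsum : ∑ ω, β ω ≤ 1)
    (hPR : ∀ ω ω', ω ≠ ω' → Q ω ω' = β ω)
    (μ : Ω → ℝ) (hμ : μ ∈ stdSimplex ℝ Ω)
    (hinv : ∀ ω, ∑ ω', μ ω' * Q ω ω' = μ ω)
    (lam : M → ℝ) (hlam : lam ∈ stdSimplex ℝ M)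
    (p : M → Ω → ℝ) (hp : ∀ m, p m ∈ stdSimplex ℝ Ω)
    (hbayes : ∀ ω, ∑ m, lam m * p m ω = μ ω)
    (α : ℝ) (hα : α = 1 - ∑ ω, β ω) :
    ∀ m : M,
      (∀ ω, ∑ ω', p m ω' * Q ω ω' =
        ∑ r, (α * (if r = m then 1 else 0) + (1 - α) * lam r) * p r ω) ∧
      (∀ r, 0 ≤ α * (if r = m then 1 else 0) + (1 - α) * lam r) ∧
      (∑ r, (α * (if r = m then 1 else 0) + (1 - α) * lam r)) = 1 ∧
      (fun ω => ∑ ω', p m ω' * Q ω ω') ∈ convexHull ℝ (Set.range p) := by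
  classical
  -- diagonal entries
  have hdiag : ∀ ω : Ω, Q ω ω = α + β ω := by
    intro ω
    have h1 : ∑ ω', Q ω' ω = Q ω ω + ∑ ω' ∈ Finset.univ.erase ω, Q ω' ω :=
      (Finset.add_sum_erase Finset.univ (fun ω' => Q ω' ω) (Finset.mem_univ ω)).symm
    have h2 : ∑ ω' ∈ Finset.univ.erase ω, Q ω' ω
        = (∑ ω', β ω') - β ω := by
      rw [show (∑ ω' ∈ Finset.univ.erase ω, Q ω' ω) = ∑ ω' ∈ Finset.univ.erase ω, β ω'
        from Finset.sum_congr rfl fun x hx => hPR x ω (Finset.ne_of_mem_erase hx),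
        Finset.sum_erase_eq_sub (Finset.mem_univ ω)]
    have := hQrow ω
    rw [h1, h2] at this
    rw [hα]; linarith
  -- action of Q on a belief
  have hact : ∀ q : Ω → ℝ, q ∈ stdSimplex ℝ Ω →
      ∀ ω, ∑ ω', q ω' * Q ω ω' = α * q ω + β ω := by
    intro q hq ω
    have h1 : ∑ ω', q ω' * Q ω ω'
        = q ω * Q ω ω + ∑ ω' ∈ Finset.univ.erase ω, q ω' * Q ω ω' := by
      rw [Finset.add_sum_erase _ (fun ω' => q ω' * Q ω ω') (Finset.mem_univ ω)]
    have h2 : ∑ ω' ∈ Finset.univ.erase ω, q ω' * Q ω ω'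
        = (1 - q ω) * β ω := by
      have : ∑ ω' ∈ Finset.univ.erase ω, q ω' * Q ω ω'
          = ∑ ω' ∈ Finset.univ.erase ω, q ω' * β ω := by
        refine Finset.sum_congr rfl fun x hx => ?_
        rw [hPR ω x (Finset.ne_of_mem_erase hx).symm]
      rw [this, ← Finset.sum_mul, Finset.sum_erase_eq_sub (Finset.mem_univ ω), hq.2]
    rw [h1, h2, hdiag ω]; ring
  -- β from μ
  have hβμ : ∀ ω, β ω = (1 - α) * μ ω := by
    intro ω
    have := hinv ω
    rw [hact μ hμ ω] at this
    linarith
  have hα0 : 0 ≤ α := by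
    rw [hα]; linarith
  have hα1 : α ≤ 1 := by
    rw [hα]
    have : 0 ≤ ∑ ω, β ω := Finset.sum_nonneg fun ω _ => hβnn ω
    linarith
  intro m
  have key : ∀ ω, ∑ ω', p m ω' * Q ω ω' =
      ∑ r, (α * (if r = m then 1 else 0) + (1 - α) * lam r) * p r ω := by
    intro ω
    rw [hact (p m) (hp m) ω, hβμ ω, ← hbayes ω]
    rw [Finset.mul_sum]
    have : ∑ r, (α * (if r = m then 1 else 0) + (1 - α) * lam r) * p r ω
        = ∑ r, ((if r = m then α * p r ω else 0) + (1 - α) * (lam r * p r ω)) := by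
      refine Finset.sum_congr rfl fun r _ => ?_
      by_cases h : r = m <;> simp [h] <;> ring
    rw [this, Finset.sum_add_distrib, Finset.sum_ite_eq' Finset.univ m
      (fun r => α * p r ω), ← Finset.mul_sum]
    simp
  have hnn : ∀ r, 0 ≤ α * (if r = m then 1 else 0) + (1 - α) * lam r := by
    intro r
    have h1 : 0 ≤ (1 - α) * lam r := mul_nonneg (by linarith) (hlam.1 r)
    by_cases h : r = m
    · subst h; simp; linarith
    · simp only [if_neg h, mul_zero, zero_add]; exact h1
  have hsum : (∑ r, (α * (if r = m then 1 else 0) + (1 - α) * lam r)) = 1 := by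
    rw [Finset.sum_add_distrib, ← Finset.mul_sum, ← Finset.mul_sum]
    simp [hlam.2]
  refine ⟨key, hnn, hsum, ?_⟩
  have heq : (fun ω => ∑ ω', p m ω' * Q ω ω')
      = ∑ r, (α * (if r = m then 1 else 0) + (1 - α) * lam r) • p r := by
    funext ω
    rw [key ω]
    simp [Finset.sum_apply]
  rw [heq]
  exact (convex_convexHull ℝ (Set.range p)).sum_mem (fun r _ => hnn r) hsum
    (fun r _ => subset_convexHull ℝ _ (Set.mem_range_self r))
end

section
/- Let Ω and M be nonempty finite sets, α ∈ [0,1], λ ∈ Δ(M), (p_m)_{m∈M} a collection of beliefs on Ω, μ = Σ_m λ(m)·p_m, q_{m'} = α·p_{m'} + (1−α)·μ for each m' ∈ M, and σ(m ∣ ω, m') = (p_m(ω)/q_{m'}(ω))·((1−α)·λ(m) + α·1{m=m'}) whenever q_{m'}(ω) > 0. Then for every ω ∈ Ω and every m ∈ M, Σ_{m' ∈ M, q_{m'}(ω) > 0} λ(m')·q_{m'}(ω)·σ(m∣ω,m') = λ(m)·p_m(ω). (This is the induction step showing that the sender's strategy regenerates the joint distribution λ(m)·p_m(ω) over states and messages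 in every period.) -/
/-- With `α ∈ [0,1]`, `lam ∈ Δ(M)`, beliefs `(p m)`,
`μ = ∑ m, lam m • p m`, `q m' = α • p m' + (1-α) • μ`, and the sender's kernel
`σ(m ∣ ω, m') = (p m ω / q m' ω) * ((1-α) * lam m + α * 1{m = m'})`
(defined whenever `q m' ω > 0`), for every `ω` and `m`:
`∑_{m' : q m' ω > 0} lam m' * q m' ω * σ(m ∣ ω, m') = lam m * p m ω`.
This is the induction step showing the sender's strategy regenerates the joint
distribution `lam m * p m ω` over states and messages in every period. -/
theorem stmt4 {Ω : Type*} {M : Type*} [Fintype Ω] [Nonempty Ω]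
    [Fintype M] [Nonempty M] [DecidableEq M]
    (α : ℝ) (hα0 : 0 ≤ α) (hα1 : α ≤ 1)
    (lam : M → ℝ) (hlam : lam ∈ stdSimplex ℝ M)
    (p : M → Ω → ℝ) (hp : ∀ m, p m ∈ stdSimplex ℝ Ω)
    (μ : Ω → ℝ) (hμ : ∀ ω, μ ω = ∑ m, lam m * p m ω)
    (q : M → Ω → ℝ) (hq : ∀ m' ω, q m' ω = α * p m' ω + (1 - α) * μ ω)
    (ω : Ω) (m : M) :
    ∑ m' ∈ Finset.univ.filter (fun m' => 0 < q m' ω),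
      lam m' * q m' ω *
        (p m ω / q m' ω * ((1 - α) * lam m + α * (if m = m' then 1 else 0)))
      = lam m * p m ω := by
  have hμnn : 0 ≤ μ ω := by
    rw [hμ]; exact Finset.sum_nonneg fun k _ => mul_nonneg (hlam.1 k) ((hp k).1 ω)
  have hqnn : ∀ m', 0 ≤ q m' ω := fun m' => by
    rw [hq]
    exact add_nonneg (mul_nonneg hα0 ((hp m').1 ω))
      (mul_nonneg (by linarith) hμnn)
  rw [Finset.sum_filter]
  have hcong : ∀ m' ∈ Finset.univ,
      (if 0 < q m' ω then lam m' * q m' ω *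
        (p m ω / q m' ω * ((1 - α) * lam m + α * (if m = m' then 1 else 0)))
       else 0)
      = lam m' * p m ω * ((1 - α) * lam m + α * (if m = m' then 1 else 0)) := by
    intro m' _
    by_cases h : 0 < q m' ω
    · rw [if_pos h]
      field_simp
    · rw [if_neg h]
      have h0 : q m' ω = 0 := le_antisymm (not_lt.mp h) (hqnn m')
      have hsum : α * p m' ω + (1 - α) * μ ω = 0 := by rw [← hq]; exact h0
      have hA : α * p m' ω = 0 := by
        nlinarith [mul_nonneg hα0 ((hp m').1 ω),
          mul_nonneg (by linarith : (0:ℝ) ≤ 1 - α) hμnn]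
      have hB : (1 - α) * μ ω = 0 := by linarith
      have hterm1 : (1 - α) * (lam m * p m ω) = 0 := by
        rcases mul_eq_zero.mp hB with h | h
        · rw [h, zero_mul]
        · have hs : ∑ k, lam k * p k ω = 0 := by rw [← hμ]; exact h
          have hz := (Finset.sum_eq_zero_iff_of_nonneg
            (fun k _ => mul_nonneg (hlam.1 k) ((hp k).1 ω))).mp hs m
            (Finset.mem_univ m)
          rw [hz, mul_zero]
      by_cases hm : m = m'
      · subst hm
        simp only [if_true, eq_self_iff_true]
        linear_combination -lam m * hterm1 - lam m * hA
      · rw [if_neg hm]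
        linear_combination -lam m' * hterm1
  rw [Finset.sum_congr rfl hcong]
  have h2 : ∑ m', lam m' * p m ω * ((1 - α) * lam m + α * (if m = m' then 1 else 0))
      = ∑ m', (lam m' * p m ω * ((1 - α) * lam m)
          + (if m = m' then lam m' * p m ω * α else 0)) := by
    apply Finset.sum_congr rfl
    intro m' _
    by_cases hm : m = m' <;> simp [hm] <;> ring
  rw [h2, Finset.sum_add_distrib, Finset.sum_ite_eq]
  simp only [Finset.mem_univ, if_pos]
  have h3 : ∑ i : M, lam i * p m ω = p m ω := by
    rw [← Finset.sum_mul, hlam.2, one_mul]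
  rw [← Finset.sum_mul, h3]
  ring
end

section
/- For every prior π ∈ Δ(Ω) and every λ ∈ Δ(M), the set E(π,λ) of equilibrium payoff vectors of the persuasion model with partial commitment is a nonempty compact subset of ℝ². In particular, a sender-optimal equilibrium payoff exists: the maximum of the first coordinate over E(π,λ) is attained. -/
open Finset

noncomputable section

/-- The receiver's best-response set `A*(p) = argmax_a ∑ ω, p ω * uR ω a`. -/
def Astar {Ω A : Type*} [Fintype Ω] (uR : Ω → A → ℝ) (p : Ω → ℝ) : Set A :=
  {a | ∀ b, ∑ ω, p ω * uR ω b ≤ ∑ ω, p ω * uR ω a}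

/-- `(p m) ∈ Σ(π, lam)`: every `p m` is a belief and `∑ m, lam m • p m = π`. -/
def BayesPlausible {Ω M : Type*} [Fintype Ω] [Fintype M]
    (π : Ω → ℝ) (lam : M → ℝ) (p : M → Ω → ℝ) : Prop :=
  (∀ m, p m ∈ stdSimplex ℝ Ω) ∧ ∀ ω, ∑ m, lam m * p m ω = π ω

/-- (Eq-R): for every `m` with `lam m > 0`, the response rule `κ(·∣m)` is
supported on the receiver's best responses to the posterior `p m`. -/
def EqR {Ω M A : Type*} [Fintype Ω]
    (uR : Ω → A → ℝ) (lam : M → ℝ) (p : M → Ω → ℝ) (κ : M → A → ℝ) : Prop :=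
  ∀ m, 0 < lam m → ∀ a, 0 < κ m a → a ∈ Astar uR (p m)

/-- (Eq-S): the sender cannot profitably deviate within `Σ(π, lam)`. -/
def EqS {Ω M A : Type*} [Fintype Ω] [Fintype M] [Fintype A]
    (uS : Ω → A → ℝ) (π : Ω → ℝ) (lam : M → ℝ)
    (p : M → Ω → ℝ) (κ : M → A → ℝ) : Prop :=
  ∀ pt : M → Ω → ℝ, BayesPlausible π lam pt →
    0 ≤ ∑ m, lam m * ∑ ω, (p m ω - pt m ω) * ∑ a, κ m a * uS ω a

/-- Expected payoff `∑ m, lam m * ∑ ω, p m ω * ∑ a, κ a m * u ω a`. -/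
def payoffOf {Ω M A : Type*} [Fintype Ω] [Fintype M] [Fintype A]
    (u : Ω → A → ℝ) (lam : M → ℝ) (p : M → Ω → ℝ) (κ : M → A → ℝ) : ℝ :=
  ∑ m, lam m * ∑ ω, p m ω * ∑ a, κ m a * u ω a

/-- `E(π, lam)`: the set of equilibrium payoff vectors of the persuasion model
with partial commitment. -/
def Epayoffs {Ω A : Type*} (M : Type*) [Fintype Ω] [Fintype M] [Fintype A]
    (uS uR : Ω → A → ℝ) (π : Ω → ℝ) (lam : M → ℝ) : Set (ℝ × ℝ) :=
  {e | ∃ (p : M → Ω → ℝ) (κ : M → A → ℝ),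
    BayesPlausible π lam p ∧ (∀ m, κ m ∈ stdSimplex ℝ A) ∧
    EqR uR lam p κ ∧ EqS uS π lam p κ ∧
    e = (payoffOf uS lam p κ, payoffOf uR lam p κ)}

/-!
An equilibrium is a pair (posteriors, response rule) cut out of the compact set
`Δ(Ω)^M × Δ(A)^M` by closed conditions: Bayes plausibility is linear, (Eq-R) is closed because
its premise `κ(a∣m) > 0` is open and "`a` is a best response to `p_m`" is closed, and
(Eq-S) is an intersection over deviations of closed half-spaces. So the equilibria form a
compact set, and `E(π, λ)` is its image under the continuous payoff map. It is nonempty because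
the babbling profile (all posteriors equal to the prior, the receiver playing a fixed best
response to the prior) is an equilibrium: against a message-independent response the sender's
payoff depends on the posteriors only through their average, which is pinned to `π`.
-/

namespace Persuasion

variable {Ω M A : Type*} [Fintype Ω]

theorem isClosed_setOf_mem_astar (uR : Ω → A → ℝ) (a : A) :
    IsClosed {p : Ω → ℝ | a ∈ Astar uR p} := by
  simp only [Astar, Set.mem_ofPred_eq]
  simp only [Set.ofPred_forall]
  exact isClosed_iInter fun b => isClosed_le (by fun_prop) (by fun_prop)

theorem isClosed_setOf_eqR (uR : Ω → A → ℝ) (lam : M → ℝ) :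
    IsClosed {q : (M → Ω → ℝ) × (M → A → ℝ) | EqR uR lam q.1 q.2} := by
  simp only [EqR, imp_forall_iff, Set.ofPred_forall]
  exact isClosed_iInter fun m => isClosed_iInter fun a => isClosed_iInter fun _ =>
    isClosed_imp (isOpen_lt continuous_const (by fun_prop))
      ((isClosed_setOf_mem_astar uR a).preimage (by fun_prop))

variable [Fintype M]

theorem isClosed_setOf_bayesPlausible (π : Ω → ℝ) (lam : M → ℝ) :
    IsClosed {p : M → Ω → ℝ | BayesPlausible π lam p} := by
  simp only [BayesPlausible, Set.ofPred_and, Set.ofPred_forall]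
  exact (isClosed_iInter fun m => (isClosed_stdSimplex ℝ Ω).preimage (continuous_apply m)).inter
    (isClosed_iInter fun ω => isClosed_eq (by fun_prop) continuous_const)

theorem isCompact_setOf_bayesPlausible (π : Ω → ℝ) (lam : M → ℝ) :
    IsCompact {p : M → Ω → ℝ | BayesPlausible π lam p} :=
  (isCompact_univ_pi fun _ => isCompact_stdSimplex ℝ Ω).of_isClosed_subset
    (isClosed_setOf_bayesPlausible π lam) fun _ hp m _ => hp.1 m

variable [Fintype A]

theorem isClosed_setOf_eqS (uS : Ω → A → ℝ) (π : Ω → ℝ) (lam : M → ℝ) :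
    IsClosed {q : (M → Ω → ℝ) × (M → A → ℝ) | EqS uS π lam q.1 q.2} := by
  simp only [EqS, Set.ofPred_forall]
  exact isClosed_iInter fun pt => isClosed_iInter fun _ =>
    isClosed_le continuous_const (by fun_prop)

theorem continuous_payoffOf (u : Ω → A → ℝ) (lam : M → ℝ) :
    Continuous fun q : (M → Ω → ℝ) × (M → A → ℝ) => payoffOf u lam q.1 q.2 := by
  unfold payoffOf
  fun_prop

def equilibria (uS uR : Ω → A → ℝ) (π : Ω → ℝ) (lam : M → ℝ) :
    Set ((M → Ω → ℝ) × (M → A → ℝ)) :=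
  {q | BayesPlausible π lam q.1 ∧ (∀ m, q.2 m ∈ stdSimplex ℝ A) ∧
    EqR uR lam q.1 q.2 ∧ EqS uS π lam q.1 q.2}

theorem epayoffs_eq_image_equilibria (uS uR : Ω → A → ℝ) (π : Ω → ℝ) (lam : M → ℝ) :
    Epayoffs M uS uR π lam =
      (fun q => (payoffOf uS lam q.1 q.2, payoffOf uR lam q.1 q.2)) ''
        equilibria uS uR π lam := by
  ext e
  constructor
  · rintro ⟨p, κ, hp, hκ, hR, hS, rfl⟩
    exact ⟨(p, κ), ⟨hp, hκ, hR, hS⟩, rfl⟩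
  · rintro ⟨⟨p, κ⟩, ⟨hp, hκ, hR, hS⟩, rfl⟩
    exact ⟨p, κ, hp, hκ, hR, hS, rfl⟩

theorem isCompact_equilibria (uS uR : Ω → A → ℝ) (π : Ω → ℝ) (lam : M → ℝ) :
    IsCompact (equilibria uS uR π lam) := by
  have hκ : IsClosed {q : (M → Ω → ℝ) × (M → A → ℝ) | ∀ m, q.2 m ∈ stdSimplex ℝ A} := by
    simp only [Set.ofPred_forall]
    exact isClosed_iInter fun m =>
      (isClosed_stdSimplex ℝ A).preimage ((continuous_apply m).comp continuous_snd)
  have hclosed : IsClosed (equilibria uS uR π lam) := by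
    simp only [equilibria, Set.ofPred_and]
    exact ((isClosed_setOf_bayesPlausible π lam).preimage continuous_fst).inter
      (hκ.inter ((isClosed_setOf_eqR uR lam).inter (isClosed_setOf_eqS uS π lam)))
  exact ((isCompact_setOf_bayesPlausible π lam).prod
    (isCompact_univ_pi fun _ => isCompact_stdSimplex ℝ A)).of_isClosed_subset hclosed
    fun _ hq => ⟨hq.1, fun m _ => hq.2.1 m⟩

theorem astar_nonempty [Nonempty A] (uR : Ω → A → ℝ) (p : Ω → ℝ) : (Astar uR p).Nonempty := by
  obtain ⟨a, -, ha⟩ := exists_max_image univ (fun a => ∑ ω, p ω * uR ω a) univ_nonempty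
  exact ⟨a, fun b => ha b (mem_univ b)⟩

theorem babbling_mem_equilibria [DecidableEq A] (uS uR : Ω → A → ℝ) {π : Ω → ℝ} {lam : M → ℝ}
    (hπ : π ∈ stdSimplex ℝ Ω) (hlam : ∑ m, lam m = 1) {a₀ : A} (ha₀ : a₀ ∈ Astar uR π) :
    ((fun _ => π, fun _ => Pi.single a₀ 1) : (M → Ω → ℝ) × (M → A → ℝ)) ∈
      equilibria uS uR π lam := by
  refine ⟨⟨fun _ => hπ, fun ω => by rw [← sum_mul, hlam, one_mul]⟩,
    fun _ => single_mem_stdSimplex ℝ a₀, ?_, ?_⟩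
  · intro m _ a ha
    obtain rfl : a = a₀ := by
      by_contra hne
      simp [hne] at ha
    exact ha₀
  · intro pt hpt
    have hsingle : ∀ ω, ∑ a, (Pi.single a₀ 1 : A → ℝ) a * uS ω a = uS ω a₀ := by
      simp [Pi.single_apply]
    simp only [hsingle]
    suffices ∑ m, lam m * ∑ ω, (π ω - pt m ω) * uS ω a₀ = 0 from this.ge
    simp_rw [mul_sum]
    rw [sum_comm]
    refine sum_eq_zero fun ω _ => ?_
    calc ∑ m, lam m * ((π ω - pt m ω) * uS ω a₀)
        = ((∑ m, lam m) * π ω - ∑ m, lam m * pt m ω) * uS ω a₀ := by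
          rw [sum_mul, ← sum_sub_distrib, sum_mul]
          exact sum_congr rfl fun m _ => by ring
      _ = 0 := by rw [hlam, one_mul, hpt.2 ω, sub_self, zero_mul]

end Persuasion

open Persuasion in
theorem stmt6_general {Ω M A : Type*} [Fintype Ω] [Fintype M]
    [Fintype A] [Nonempty A]
    (uS uR : Ω → A → ℝ) (π : Ω → ℝ) (lam : M → ℝ)
    (hπ : π ∈ stdSimplex ℝ Ω) (hlam : lam ∈ stdSimplex ℝ M) :
    (Epayoffs M uS uR π lam).Nonempty ∧
    IsCompact (Epayoffs M uS uR π lam) ∧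
    ∃ e ∈ Epayoffs M uS uR π lam, ∀ e' ∈ Epayoffs M uS uR π lam, e'.1 ≤ e.1 := by
  classical
  obtain ⟨a₀, ha₀⟩ := astar_nonempty uR π
  rw [epayoffs_eq_image_equilibria]
  have hne := (Set.nonempty_of_mem (babbling_mem_equilibria uS uR hπ hlam.2 ha₀)).image
    (fun q => (payoffOf uS lam q.1 q.2, payoffOf uR lam q.1 q.2))
  have hcompact := (isCompact_equilibria uS uR π lam).image
    ((continuous_payoffOf uS lam).prodMk (continuous_payoffOf uR lam))
  obtain ⟨e, he, hmax⟩ := hcompact.exists_isMaxOn hne continuous_fst.continuousOn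
  exact ⟨hne, hcompact, e, he, fun e' he' => hmax he'⟩

/-- For every prior `π ∈ Δ(Ω)` and marginal `lam ∈ Δ(M)`, the set
`E(π, lam)` of equilibrium payoff vectors of the persuasion model with partial
commitment is a nonempty compact subset of `ℝ²`; in particular a sender-optimal
equilibrium payoff exists. -/
theorem stmt6 {Ω M A : Type*} [Fintype Ω] [Nonempty Ω] [Fintype M] [Nonempty M]
    [Fintype A] [Nonempty A]
    (uS uR : Ω → A → ℝ) (π : Ω → ℝ) (lam : M → ℝ)
    (hπ : π ∈ stdSimplex ℝ Ω) (hlam : lam ∈ stdSimplex ℝ M) :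
    (Epayoffs M uS uR π lam).Nonempty ∧
    IsCompact (Epayoffs M uS uR π lam) ∧
    ∃ e ∈ Epayoffs M uS uR π lam, ∀ e' ∈ Epayoffs M uS uR π lam, e'.1 ≤ e.1 :=
  stmt6_general uS uR π lam hπ hlam
end
end

section
/- Let π ∈ Δ(Ω), let ρ : Ω → Δ(M) be a signaling policy, define λ(m) = Σ_ω π(ω)·ρ(m∣ω), and let (p_m)_{m∈M} be beliefs satisfying λ(m)·p_m(ω) = π(ω)·ρ(m∣ω) for every ω and every m with λ(m) > 0. Let κ : M → Δ(A) satisfy the cheap-talk sender incentive condition: for every ω with π(ω) > 0, every m with ρ(m∣ω) > 0, and every m' ∈ M, Σ_a κ(a∣m)·u_S(ω,a) ≥ Σ_a κ(a∣m')·u_S(ω,a). Then (p_m) ∈ Σ(π,λ) and ((p_m), κ) satisfies (Eq-S). Consequently, if κ additionally satisfies (Eq-R), then ((p_m), κ) is an equilibrium of the persuasion model with partial commitment, so every cheap-talk equilibrium payoff vector belongs to E(π,λ) for its induced marginal λ. -/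
open Finset

noncomputable section

/-- Let `ρ : Ω → Δ(M)` be a signaling policy with induced marginal
`lam m = ∑ ω, π ω * ρ ω m` and Bayes-consistent posteriors `(p m)` (i.e.
`lam m * p m ω = π ω * ρ ω m` whenever `lam m > 0`). If `κ` satisfies the
cheap-talk sender incentive condition, then `(p m) ∈ Σ(π, lam)` and
`((p m), κ)` satisfies (Eq-S); consequently, if `κ` also satisfies (Eq-R),
then `((p m), κ)` is an equilibrium of the persuasion model with partial
commitment, so every cheap-talk equilibrium payoff vector belongs to
`E(π, lam)` for its induced marginal `lam`. -/
theorem stmt7 {Ω M A : Type*} [Fintype Ω] [Nonempty Ω] [Fintype M] [Nonempty M]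
    [Fintype A] [Nonempty A]
    (uS uR : Ω → A → ℝ) (π : Ω → ℝ) (hπ : π ∈ stdSimplex ℝ Ω)
    (ρ : Ω → M → ℝ) (hρ : ∀ ω, ρ ω ∈ stdSimplex ℝ M)
    (lam : M → ℝ) (hlam : ∀ m, lam m = ∑ ω, π ω * ρ ω m)
    (p : M → Ω → ℝ) (hp : ∀ m, p m ∈ stdSimplex ℝ Ω)
    (hbayes : ∀ m, 0 < lam m → ∀ ω, lam m * p m ω = π ω * ρ ω m)
    (κ : M → A → ℝ) (hκ : ∀ m, κ m ∈ stdSimplex ℝ A)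
    (hIC : ∀ ω, 0 < π ω → ∀ m, 0 < ρ ω m → ∀ m',
      ∑ a, κ m' a * uS ω a ≤ ∑ a, κ m a * uS ω a) :
    BayesPlausible π lam p ∧
    EqS uS π lam p κ ∧
    (EqR uR lam p κ →
      (payoffOf uS lam p κ, payoffOf uR lam p κ) ∈ Epayoffs M uS uR π lam) := by
  classical
  have hπ0 : ∀ ω, 0 ≤ π ω := hπ.1
  have hρ0 : ∀ ω m, 0 ≤ ρ ω m := fun ω => (hρ ω).1
  have hlam0 : ∀ m, 0 ≤ lam m := fun m => (hlam m) ▸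
    Finset.sum_nonneg fun ω _ => mul_nonneg (hπ0 ω) (hρ0 ω m)
  have hterm : ∀ m ω, lam m * p m ω = π ω * ρ ω m := by
    intro m ω
    rcases lt_or_eq_of_le (hlam0 m) with h | h
    · exact hbayes m h ω
    · have hsum : ∑ ω, π ω * ρ ω m = 0 := by rw [← hlam m, ← h]
      have hz : π ω * ρ ω m = 0 :=
        (Finset.sum_eq_zero_iff_of_nonneg
          (fun ω _ => mul_nonneg (hπ0 ω) (hρ0 ω m))).1 hsum ω (Finset.mem_univ ω)
      rw [← h, zero_mul, hz]
  have hBP : BayesPlausible π lam p := by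
    refine ⟨hp, fun ω => ?_⟩
    simp_rw [hterm]
    rw [← Finset.mul_sum, (hρ ω).2, mul_one]
  set V : M → Ω → ℝ := fun m ω => ∑ a, κ m a * uS ω a with hV
  set g : Ω → ℝ := fun ω => Finset.univ.sup' Finset.univ_nonempty fun m => V m ω with hg
  have hle : ∀ m ω, V m ω ≤ g ω := fun m ω => Finset.le_sup' (fun m => V m ω) (Finset.mem_univ m)
  have hgeq : ∀ ω, 0 < π ω → ∀ m, 0 < ρ ω m → V m ω = g ω := by
    intro ω hω m hm
    exact le_antisymm (hle m ω) (Finset.sup'_le _ _ fun m' _ => hIC ω hω m hm m')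
  have hkey : ∀ q : M → Ω → ℝ, (∀ m, q m ∈ stdSimplex ℝ Ω) →
      (∀ ω, ∑ m, lam m * q m ω = π ω) →
      ∑ m, lam m * ∑ ω, q m ω * V m ω ≤ ∑ ω, π ω * g ω := by
    intro q hq hqsum
    calc ∑ m, lam m * ∑ ω, q m ω * V m ω
        ≤ ∑ m, lam m * ∑ ω, q m ω * g ω := by
          refine Finset.sum_le_sum fun m _ => mul_le_mul_of_nonneg_left ?_ (hlam0 m)
          exact Finset.sum_le_sum fun ω _ =>
            mul_le_mul_of_nonneg_left (hle m ω) ((hq m).1 ω)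
      _ = ∑ ω, π ω * g ω := by
          simp_rw [Finset.mul_sum, ← mul_assoc]
          rw [Finset.sum_comm]
          refine Finset.sum_congr rfl fun ω _ => ?_
          rw [← Finset.sum_mul, hqsum ω]
  have hvalue : ∑ m, lam m * ∑ ω, p m ω * V m ω = ∑ ω, π ω * g ω := by
    have : ∀ m, lam m * ∑ ω, p m ω * V m ω = ∑ ω, π ω * ρ ω m * V m ω := by
      intro m
      rw [Finset.mul_sum]
      exact Finset.sum_congr rfl fun ω _ => by rw [← mul_assoc, hterm m ω]
    simp_rw [this]
    rw [Finset.sum_comm]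
    refine Finset.sum_congr rfl fun ω _ => ?_
    rcases lt_or_eq_of_le (hπ0 ω) with hω | hω
    · have : ∀ m, π ω * ρ ω m * V m ω = π ω * ρ ω m * g ω := by
        intro m
        rcases lt_or_eq_of_le (hρ0 ω m) with hm | hm
        · rw [hgeq ω hω m hm]
        · rw [← hm, mul_zero, zero_mul, zero_mul]
      simp_rw [this, mul_assoc, ← Finset.mul_sum, ← Finset.sum_mul, (hρ ω).2, one_mul]
    · simp [← hω]
  have hEqS : EqS uS π lam p κ := by
    intro pt hpt
    have hdev : ∑ m, lam m * ∑ ω, pt m ω * V m ω ≤ ∑ m, lam m * ∑ ω, p m ω * V m ω := by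
      rw [hvalue]; exact hkey pt hpt.1 hpt.2
    have : ∑ m, lam m * ∑ ω, (p m ω - pt m ω) * V m ω
        = (∑ m, lam m * ∑ ω, p m ω * V m ω) - ∑ m, lam m * ∑ ω, pt m ω * V m ω := by
      rw [← Finset.sum_sub_distrib]
      refine Finset.sum_congr rfl fun m _ => ?_
      rw [← mul_sub, ← Finset.sum_sub_distrib]
      simp_rw [← sub_mul]
    rw [show (0:ℝ) ≤ ∑ m, lam m * ∑ ω, (p m ω - pt m ω) * V m ω ↔ _ from Iff.rfl, this]
    exact sub_nonneg.2 hdev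
  exact ⟨hBP, hEqS, fun hEqR => ⟨p, κ, hBP, hκ, hEqR, hEqS, rfl⟩⟩
end
end

section
/- Suppose the sender's payoff is state-independent: u_S(ω,a) = v(a) for some v : A → ℝ and all ω. Then for every prior π ∈ Δ(Ω), the supremum over λ ∈ Δ(M) of sup{e_S : (e_S, e_R) ∈ E(π,λ)} is attained and equals the maximum over λ ∈ Δ(M) and (p_m) ∈ Σ(π,λ) of Σ_m λ(m)·max_{a ∈ A*(p_m)} v(a), i.e., the sender's maximal partial-commitment payoff equals the Bayesian persuasion payoff with sender-preferred tie-breaking. -/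
/-!
With a state-independent sender payoff, moving posteriors within `Σ(π, λ)` does not change
the sender's payoff, so (Eq-S) holds automatically and equilibria are just Bayes-plausible
posteriors with obedient responses. At such a profile the sender gets at most
`∑ m, λ m * max_{A*(p m)} v`, with equality when every message triggers her preferred best
response. The objective `∑ m, λ m * ∑ a, κ m a * v a` is continuous on the compact set of
profiles that are obedient at every message, and a maximizer there is both an equilibrium and
a solution of the tie-broken persuasion problem.
-/

open Finset

noncomputable section

/-- The sender-preferred value over the receiver's best responses at belief `p`:
`max_{a ∈ A*(p)} v a` (expressed as a supremum in `ℝ`). -/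
def tieBreakVal {Ω A : Type*} [Fintype Ω] (uR : Ω → A → ℝ) (v : A → ℝ)
    (p : Ω → ℝ) : ℝ :=
  sSup (v '' Astar uR p)

section BestResponse

variable {Ω A : Type*} [Fintype Ω]

lemma isClosed_setOf_mem_Astar (uR : Ω → A → ℝ) (a : A) :
    IsClosed {p : Ω → ℝ | a ∈ Astar uR p} := by
  show IsClosed {p : Ω → ℝ | ∀ b, ∑ ω, p ω * uR ω b ≤ ∑ ω, p ω * uR ω a}
  rw [Set.ofPred_forall]
  exact isClosed_iInter fun b => isClosed_le (by fun_prop) (by fun_prop)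

variable [Fintype A] [Nonempty A]

lemma Astar_nonempty (uR : Ω → A → ℝ) (p : Ω → ℝ) : (Astar uR p).Nonempty := by
  obtain ⟨a, -, ha⟩ := univ.exists_max_image (fun a => ∑ ω, p ω * uR ω a) univ_nonempty
  exact ⟨a, fun b => ha b (mem_univ b)⟩

lemma exists_mem_Astar_tieBreakVal_eq (uR : Ω → A → ℝ) (v : A → ℝ) (p : Ω → ℝ) :
    ∃ a ∈ Astar uR p, (∀ b ∈ Astar uR p, v b ≤ v a) ∧ tieBreakVal uR v p = v a := by
  obtain ⟨a, ha, hmax⟩ := (Astar uR p).exists_max_image v (Astar uR p).toFinite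
    (Astar_nonempty uR p)
  refine ⟨a, ha, hmax, IsGreatest.csSup_eq ⟨⟨a, ha, rfl⟩, ?_⟩⟩
  rintro _ ⟨b, hb, rfl⟩
  exact hmax b hb

end BestResponse

lemma sum_mul_le_of_mem_stdSimplex {A : Type*} [Fintype A] {κ : A → ℝ} (hκ : κ ∈ stdSimplex ℝ A)
    {v : A → ℝ} {c : ℝ} (h : ∀ a, 0 < κ a → v a ≤ c) : ∑ a, κ a * v a ≤ c :=
  calc ∑ a, κ a * v a ≤ ∑ a, κ a * c := by
        refine sum_le_sum fun a _ => ?_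
        rcases (hκ.1 a).lt_or_eq with hpos | hzero
        · exact mul_le_mul_of_nonneg_left (h a hpos) hpos.le
        · simp [← hzero]
    _ = c := by rw [← sum_mul, hκ.2, one_mul]

section StateIndependent

variable {Ω M A : Type*} [Fintype Ω] [Fintype M] [Fintype A] {uS : Ω → A → ℝ} {v : A → ℝ}
  {lam : M → ℝ} {p : M → Ω → ℝ} {κ : M → A → ℝ}

lemma payoffOf_of_stateIndependent (hv : ∀ ω a, uS ω a = v a)
    (hp : ∀ m, p m ∈ stdSimplex ℝ Ω) :
    payoffOf uS lam p κ = ∑ m, lam m * ∑ a, κ m a * v a := by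
  refine sum_congr rfl fun m _ => ?_
  simp only [hv, ← sum_mul, (hp m).2, one_mul]

lemma eqS_of_stateIndependent (hv : ∀ ω a, uS ω a = v a) (π : Ω → ℝ)
    (hp : ∀ m, p m ∈ stdSimplex ℝ Ω) : EqS uS π lam p κ := by
  intro pt hpt
  simp only [hv, ← sum_mul, sum_sub_distrib, (hp _).2, (hpt.1 _).2, sub_self, zero_mul,
    mul_zero, sum_const_zero, le_refl]

lemma payoffOf_le_tieBreakVal [Nonempty A] (hv : ∀ ω a, uS ω a = v a) (uR : Ω → A → ℝ)
    (hlam : ∀ m, 0 ≤ lam m) (hp : ∀ m, p m ∈ stdSimplex ℝ Ω)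
    (hκ : ∀ m, κ m ∈ stdSimplex ℝ A) (hR : EqR uR lam p κ) :
    payoffOf uS lam p κ ≤ ∑ m, lam m * tieBreakVal uR v (p m) := by
  rw [payoffOf_of_stateIndependent hv hp]
  refine sum_le_sum fun m _ => ?_
  rcases (hlam m).lt_or_eq with hpos | hzero
  · obtain ⟨a, -, hmax, hval⟩ := exists_mem_Astar_tieBreakVal_eq uR v (p m)
    rw [hval]
    exact mul_le_mul_of_nonneg_left
      (sum_mul_le_of_mem_stdSimplex (hκ m) fun b hb => hmax b (hR m hpos b hb)) hpos.le
  · simp [← hzero]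

end StateIndependent

section ObedientProfiles

variable {Ω M A : Type*} [Fintype Ω] [Fintype M] [Fintype A]

/-- Unlike (Eq-R), obedience is required also at messages of probability zero; this keeps
the set closed. -/
def obedientProfiles (uR : Ω → A → ℝ) (π : Ω → ℝ) :
    Set ((M → ℝ) × (M → Ω → ℝ) × (M → A → ℝ)) :=
  {x | x.1 ∈ stdSimplex ℝ M ∧ BayesPlausible π x.1 x.2.1 ∧ (∀ m, x.2.2 m ∈ stdSimplex ℝ A) ∧
    ∀ m a, 0 < x.2.2 m a → a ∈ Astar uR (x.2.1 m)}

lemma isClosed_obedientProfiles (uR : Ω → A → ℝ) (π : Ω → ℝ) :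
    IsClosed (obedientProfiles (M := M) uR π) := by
  simp only [obedientProfiles, BayesPlausible, imp_iff_not_or, not_lt, Set.ofPred_and,
    Set.ofPred_forall, Set.ofPred_or]
  refine ((isClosed_stdSimplex ℝ M).preimage continuous_fst).inter
    (((isClosed_iInter fun m => (isClosed_stdSimplex ℝ Ω).preimage (by fun_prop)).inter
      (isClosed_iInter fun ω => isClosed_eq (by fun_prop) continuous_const)).inter
    ((isClosed_iInter fun m => (isClosed_stdSimplex ℝ A).preimage (by fun_prop)).inter
      (isClosed_iInter fun m => isClosed_iInter fun a =>
        (isClosed_le (by fun_prop) continuous_const).union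
          ((isClosed_setOf_mem_Astar uR a).preimage (by fun_prop)))))

lemma isCompact_obedientProfiles (uR : Ω → A → ℝ) (π : Ω → ℝ) :
    IsCompact (obedientProfiles (M := M) uR π) :=
  ((isCompact_stdSimplex ℝ M).prod ((isCompact_univ_pi fun _ => isCompact_stdSimplex ℝ Ω).prod
      (isCompact_univ_pi fun _ => isCompact_stdSimplex ℝ A))).of_isClosed_subset
    (isClosed_obedientProfiles uR π)
    fun _ hx => ⟨hx.1, fun m _ => hx.2.1.1 m, fun m _ => hx.2.2.1 m⟩

variable [Nonempty A]

lemma exists_obedientProfiles_tieBreakVal (uR : Ω → A → ℝ) (v : A → ℝ) {π : Ω → ℝ}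
    {lam : M → ℝ} (hlam : lam ∈ stdSimplex ℝ M) {p : M → Ω → ℝ}
    (hp : BayesPlausible π lam p) :
    ∃ κ : M → A → ℝ, (lam, p, κ) ∈ obedientProfiles uR π ∧
      ∑ m, lam m * ∑ a, κ m a * v a = ∑ m, lam m * tieBreakVal uR v (p m) := by
  classical
  choose a ha _ hval using fun m => exists_mem_Astar_tieBreakVal_eq uR v (p m)
  refine ⟨fun m => Pi.single (a m) 1, ⟨hlam, hp, fun m => single_mem_stdSimplex ℝ (a m), ?_⟩, ?_⟩
  · intro m b hb
    obtain rfl : b = a m := by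
      by_contra hne
      simp [hne] at hb
    exact ha m
  · simp [Pi.single_apply, hval]

lemma obedientProfiles_nonempty [Nonempty M] (uR : Ω → A → ℝ) {π : Ω → ℝ}
    (hπ : π ∈ stdSimplex ℝ Ω) : (obedientProfiles (M := M) uR π).Nonempty := by
  classical
  let m₀ := Classical.arbitrary M
  have hp : BayesPlausible π (Pi.single m₀ 1) fun _ => π :=
    ⟨fun _ => hπ, fun ω => by simp [Pi.single_apply]⟩
  obtain ⟨κ, hκ, -⟩ := exists_obedientProfiles_tieBreakVal uR 0 (single_mem_stdSimplex ℝ m₀) hp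
  exact ⟨_, hκ⟩

end ObedientProfiles

section Equilibrium

variable {Ω M A : Type*} [Fintype Ω] [Fintype M] [Fintype A] {uS uR : Ω → A → ℝ} {v : A → ℝ}
  {π : Ω → ℝ} {lam : M → ℝ}

lemma mk_mem_Epayoffs (hv : ∀ ω a, uS ω a = v a) {p : M → Ω → ℝ} {κ : M → A → ℝ}
    (hx : (lam, p, κ) ∈ obedientProfiles uR π) :
    (payoffOf uS lam p κ, payoffOf uR lam p κ) ∈ Epayoffs M uS uR π lam :=
  ⟨p, κ, hx.2.1, hx.2.2.1, fun m _ => hx.2.2.2 m,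
    eqS_of_stateIndependent hv π hx.2.1.1, rfl⟩

lemma exists_le_tieBreakVal_of_mem_Epayoffs [Nonempty A] (hv : ∀ ω a, uS ω a = v a)
    (hlam : lam ∈ stdSimplex ℝ M) {e : ℝ × ℝ} (he : e ∈ Epayoffs M uS uR π lam) :
    ∃ p, BayesPlausible π lam p ∧ e.1 ≤ ∑ m, lam m * tieBreakVal uR v (p m) := by
  obtain ⟨p, κ, hp, hκ, hR, -, rfl⟩ := he
  exact ⟨p, hp, payoffOf_le_tieBreakVal hv uR hlam.1 hp.1 hκ hR⟩

end Equilibrium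

theorem stmt9_general {Ω M A : Type*} [Fintype Ω] [Fintype M] [Nonempty M]
    [Fintype A] [Nonempty A]
    (uS uR : Ω → A → ℝ) (v : A → ℝ) (hv : ∀ ω a, uS ω a = v a)
    (π : Ω → ℝ) (hπ : π ∈ stdSimplex ℝ Ω) :
    ∃ lam ∈ stdSimplex ℝ M, ∃ e ∈ Epayoffs M uS uR π lam,
      (∀ lam' ∈ stdSimplex ℝ M, ∀ e' ∈ Epayoffs M uS uR π lam', e'.1 ≤ e.1) ∧
      (∃ p : M → Ω → ℝ, BayesPlausible π lam p ∧
        e.1 = ∑ m, lam m * tieBreakVal uR v (p m)) ∧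
      (∀ lam' ∈ stdSimplex ℝ M, ∀ p' : M → Ω → ℝ, BayesPlausible π lam' p' →
        ∑ m, lam' m * tieBreakVal uR v (p' m) ≤ e.1) := by
  obtain ⟨⟨lam, p, κ⟩, hx, hmax⟩ := (isCompact_obedientProfiles uR π).exists_isMaxOn
    (obedientProfiles_nonempty uR hπ) (Continuous.continuousOn (by fun_prop :
      Continuous fun x : (M → ℝ) × (M → Ω → ℝ) × (M → A → ℝ) =>
        ∑ m, x.1 m * ∑ a, x.2.2 m a * v a))
  have hpay := payoffOf_of_stateIndependent (lam := lam) (κ := κ) hv hx.2.1.1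
  have hbound : ∀ lam' ∈ stdSimplex ℝ M, ∀ p' : M → Ω → ℝ, BayesPlausible π lam' p' →
      ∑ m, lam' m * tieBreakVal uR v (p' m) ≤ payoffOf uS lam p κ := by
    intro lam' hlam' p' hp'
    obtain ⟨κ', hx', hval⟩ := exists_obedientProfiles_tieBreakVal uR v hlam' hp'
    exact hpay ▸ hval ▸ hmax hx'
  refine ⟨lam, hx.1, _, mk_mem_Epayoffs hv hx, fun lam' hlam' e' he' => ?_,
    ⟨p, hx.2.1, le_antisymm ?_ (hbound lam hx.1 p hx.2.1)⟩, hbound⟩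
  · obtain ⟨p', hp', hle⟩ := exists_le_tieBreakVal_of_mem_Epayoffs hv hlam' he'
    exact hle.trans (hbound lam' hlam' p' hp')
  · exact payoffOf_le_tieBreakVal hv uR hx.1.1 hx.2.1.1 hx.2.2.1 fun m _ => hx.2.2.2 m

/-- If the sender's payoff is state-independent (`uS ω a = v a`),
then for every prior `π ∈ Δ(Ω)` the supremum over marginals `lam ∈ Δ(M)` of the
sender's equilibrium payoffs in `E(π, lam)` is attained, and equals the maximum
over `lam ∈ Δ(M)` and `(p m) ∈ Σ(π, lam)` of `∑ m, lam m * max_{a ∈ A*(p m)} v a`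
— the Bayesian persuasion payoff with sender-preferred tie-breaking. -/
theorem stmt9 {Ω M A : Type*} [Fintype Ω] [Nonempty Ω] [Fintype M] [Nonempty M]
    [Fintype A] [Nonempty A]
    (uS uR : Ω → A → ℝ) (v : A → ℝ) (hv : ∀ ω a, uS ω a = v a)
    (π : Ω → ℝ) (hπ : π ∈ stdSimplex ℝ Ω) :
    ∃ lam ∈ stdSimplex ℝ M, ∃ e ∈ Epayoffs M uS uR π lam,
      (∀ lam' ∈ stdSimplex ℝ M, ∀ e' ∈ Epayoffs M uS uR π lam', e'.1 ≤ e.1) ∧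
      (∃ p : M → Ω → ℝ, BayesPlausible π lam p ∧
        e.1 = ∑ m, lam m * tieBreakVal uR v (p m)) ∧
      (∀ lam' ∈ stdSimplex ℝ M, ∀ p' : M → Ω → ℝ, BayesPlausible π lam' p' →
        ∑ m, lam' m * tieBreakVal uR v (p' m) ≤ e.1) :=
  stmt9_general uS uR v hv π hπ
end
end

section
/- Define the sender's indirect utility û_S(p) = max_{a ∈ A*(p)} Σ_ω p(ω)·u_S(ω,a) (ties broken in favor of the sender). Then for every prior π ∈ Δ(Ω), every λ ∈ Δ(M), every (p_m) ∈ Σ(π,λ), every response rule κ satisfying (Eq-R), and every concave function g : Δ(Ω) → ℝ with g(p) ≥ û_S(p) for all p ∈ Δ(Ω), the sender's payoff satisfies Σ_m λ(m) Σ_ω p_m(ω) Σ_a κ(a∣m)·u_S(ω,a) ≤ g(π). In particular, every equilibrium payoff of the persuasion model with partial commitment gives the sender at most the concave envelope of û_S evaluated at π (the Bayesian persuasion payoff). -/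
open Finset

noncomputable section

/-- The sender's indirect utility
`û_S(p) = max_{a ∈ A*(p)} ∑ ω, p ω * uS ω a` (ties broken in favor of the
sender), expressed as a supremum in `ℝ`. -/
def uhatS {Ω A : Type*} [Fintype Ω] (uS uR : Ω → A → ℝ) (p : Ω → ℝ) : ℝ :=
  sSup {y | ∃ a ∈ Astar uR p, y = ∑ ω, p ω * uS ω a}

/-- For every prior `π ∈ Δ(Ω)`, marginal `lam ∈ Δ(M)`,
`(p m) ∈ Σ(π, lam)`, response rule `κ` satisfying (Eq-R), and every concave
`g : Δ(Ω) → ℝ` with `g ≥ û_S` on the simplex, the sender's payoff is at most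
`g π`; in particular every equilibrium payoff of the persuasion model with
partial commitment gives the sender at most the concave envelope of `û_S` at
`π` (the Bayesian persuasion payoff). -/
theorem stmt11 {Ω M A : Type*} [Fintype Ω] [Nonempty Ω] [Fintype M] [Nonempty M]
    [Fintype A] [Nonempty A]
    (uS uR : Ω → A → ℝ) (π : Ω → ℝ) (lam : M → ℝ)
    (hπ : π ∈ stdSimplex ℝ Ω) (hlam : lam ∈ stdSimplex ℝ M)
    (p : M → Ω → ℝ) (hp : BayesPlausible π lam p)
    (κ : M → A → ℝ) (hκ : ∀ m, κ m ∈ stdSimplex ℝ A)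
    (heqr : EqR uR lam p κ)
    (g : (Ω → ℝ) → ℝ) (hg : ConcaveOn ℝ (stdSimplex ℝ Ω) g)
    (hge : ∀ q ∈ stdSimplex ℝ Ω, uhatS uS uR q ≤ g q) :
    payoffOf uS lam p κ ≤ g π := by
  have hπeq : π = ∑ m, lam m • p m := by
    funext ω
    rw [Finset.sum_apply]
    exact ((hp.2 ω).symm)
  have jensen : (∑ m, lam m • g (p m)) ≤ g π := by
    rw [hπeq]
    exact hg.le_map_sum (fun i _ => hlam.1 i) hlam.2 (fun i _ => hp.1 i)
  refine le_trans ?_ (by simpa [smul_eq_mul] using jensen)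
  unfold payoffOf
  apply Finset.sum_le_sum
  intro m _
  rcases lt_or_eq_of_le (hlam.1 m) with hpos | hzero
  · apply mul_le_mul_of_nonneg_left _ (le_of_lt hpos)
    -- inner ≤ g (p m)
    have hub : ∀ a, 0 < κ m a → (∑ ω, p m ω * uS ω a) ≤ g (p m) := by
      intro a ha
      have hast := heqr m hpos a ha
      have hmem : (∑ ω, p m ω * uS ω a) ∈
          {y | ∃ b ∈ Astar uR (p m), y = ∑ ω, p m ω * uS ω b} := ⟨a, hast, rfl⟩
      have hbdd : BddAbove {y | ∃ b ∈ Astar uR (p m), y = ∑ ω, p m ω * uS ω b} := by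
        apply (Set.Finite.subset (Set.finite_range (fun b => ∑ ω, p m ω * uS ω b)) ?_).bddAbove
        rintro y ⟨b, -, rfl⟩; exact ⟨b, rfl⟩
      exact le_trans (le_csSup hbdd hmem) (hge (p m) (hp.1 m))
    calc ∑ ω, p m ω * ∑ a, κ m a * uS ω a
        = ∑ a, κ m a * ∑ ω, p m ω * uS ω a := by
          simp_rw [Finset.mul_sum]
          rw [Finset.sum_comm]
          exact Finset.sum_congr rfl fun a _ => Finset.sum_congr rfl fun ω _ => by ring
      _ ≤ ∑ a, κ m a * g (p m) := by
          apply Finset.sum_le_sum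
          intro a _
          rcases lt_or_eq_of_le ((hκ m).1 a) with h | h
          · exact mul_le_mul_of_nonneg_left (hub a h) h.le
          · simp [← h]
      _ = g (p m) := by rw [← Finset.sum_mul, (hκ m).2, one_mul]
  · simp [← hzero]
end
end

section
/- In the think-tank game with prior π = (1/2, 1/2): (i) with marginal λ = (1/3, 2/3) on M = {m1, m2}, the pair consisting of posteriors p_{m1} = point mass on ω1 and p_{m2} = (1/4, 3/4), together with the response rule κ with κ(a1∣m1) = 1 and κ(a2∣m2) = 1, is an equilibrium of the persuasion model with partial commitment, and its sender payoff is e_S = 5/3; (ii) moreover, for every λ' ∈ Δ(M) and every (e_S, e_R) ∈ E(π, λ'), e_S ≤ 5/3. Hence the sender's maximal partial-commitment payoff across marginals equals the Bayesian persuasion payoff 5/3. -/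
open Finset

noncomputable section

/- The think-tank game: `Ω = Fin 2` (`0 = ω1`, `1 = ω2`), `M = Fin 2`
(`0 = m1`, `1 = m2`), `A = Fin 3` (`0 = a0`, `1 = a1`, `2 = a2`). -/

/-- Think tank (sender) payoffs: `a0 ↦ 0`, `a1 ↦ 1`, `a2 ↦ 2` in both states. -/
def uS_tt : Fin 2 → Fin 3 → ℝ := ![![0, 1, 2], ![0, 1, 2]]

/-- Lawmaker (receiver) payoffs: in `ω1`: `a0 ↦ 3, a1 ↦ 4, a2 ↦ 0`; in `ω2`:
`a0 ↦ 3, a1 ↦ 0, a2 ↦ 4`. -/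
def uR_tt : Fin 2 → Fin 3 → ℝ := ![![3, 4, 0], ![3, 0, 4]]

/-- In the think-tank game with prior `π = (1/2, 1/2)`:
(i) with marginal `lam = (1/3, 2/3)`, posteriors `p m1 = δ_{ω1}`,
`p m2 = (1/4, 3/4)` and response rule `κ(a1∣m1) = 1`, `κ(a2∣m2) = 1` form an
equilibrium of the persuasion model with partial commitment with sender payoff
`5/3`; (ii) for every `lam' ∈ Δ(M)` and every `(e_S, e_R) ∈ E(π, lam')`,
`e_S ≤ 5/3`. Hence the sender's maximal partial-commitment payoff across
marginals equals the Bayesian persuasion payoff `5/3`. -/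
theorem stmt15 :
    (BayesPlausible (![1/2, 1/2] : Fin 2 → ℝ) (![1/3, 2/3] : Fin 2 → ℝ)
      ![![1, 0], ![1/4, 3/4]] ∧
    (∀ m : Fin 2, (![![0, 1, 0], ![0, 0, 1]] : Fin 2 → Fin 3 → ℝ) m ∈
      stdSimplex ℝ (Fin 3)) ∧
    EqR uR_tt (![1/3, 2/3] : Fin 2 → ℝ) ![![1, 0], ![1/4, 3/4]]
      ![![0, 1, 0], ![0, 0, 1]] ∧
    EqS uS_tt (![1/2, 1/2] : Fin 2 → ℝ) (![1/3, 2/3] : Fin 2 → ℝ)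
      ![![1, 0], ![1/4, 3/4]] ![![0, 1, 0], ![0, 0, 1]] ∧
    payoffOf uS_tt (![1/3, 2/3] : Fin 2 → ℝ) ![![1, 0], ![1/4, 3/4]]
      ![![0, 1, 0], ![0, 0, 1]] = (5/3 : ℝ)) ∧
    (∀ lam' ∈ stdSimplex ℝ (Fin 2),
      ∀ e ∈ Epayoffs (Fin 2) uS_tt uR_tt (![1/2, 1/2] : Fin 2 → ℝ) lam',
        e.1 ≤ (5/3 : ℝ)) := by
  constructor
  · refine ⟨?_, ?_, ?_, ?_, ?_⟩
    · constructor
      · intro m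
        fin_cases m <;> constructor <;>
          first
          | (intro x; fin_cases x <;> norm_num)
          | (simp [Fin.sum_univ_two] <;> norm_num)
      · intro ω
        fin_cases ω <;> simp [Fin.sum_univ_two] <;> norm_num
    · intro m
      fin_cases m <;> constructor <;>
        first
        | (intro x; fin_cases x <;> norm_num)
        | (simp [Fin.sum_univ_three] <;> norm_num)
    · intro m hm a ha
      simp only [Astar, Set.mem_setOf_eq]
      fin_cases m <;> fin_cases a
      · exact absurd ha (by norm_num)
      · intro b; fin_cases b <;> norm_num [uR_tt, Fin.sum_univ_two]
      · exact absurd ha (by norm_num)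
      · exact absurd ha (by norm_num)
      · exact absurd ha (by norm_num)
      · intro b; fin_cases b <;> norm_num [uR_tt, Fin.sum_univ_two]
    · intro pt hpt
      have h0 := (hpt.1 0).2
      have h1 := (hpt.1 1).2
      simp [Fin.sum_univ_two] at h0 h1
      simp [EqS, uS_tt, Fin.sum_univ_two, Fin.sum_univ_three]
      nlinarith [h0, h1]
    · simp [payoffOf, uS_tt, Fin.sum_univ_two, Fin.sum_univ_three]
      norm_num
  · rintro lam' hlam' e ⟨p, κ, hbp, hκ, heqr, heqs, rfl⟩
    have hsum : ∑ m : Fin 2, lam' m = 1 := hlam'.2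
    have hbayes := hbp.2 1
    simp [Fin.sum_univ_two] at hsum hbayes
    have key : ∀ m : Fin 2, lam' m * ∑ ω, p m ω * ∑ a, κ m a * uS_tt ω a ≤
        lam' m * (1 + 4/3 * p m 1) := by
      intro m
      have hlampos := hlam'.1 m
      have hp0 := (hbp.1 m).1 0
      have hp1 := (hbp.1 m).1 1
      have hps := (hbp.1 m).2
      simp [Fin.sum_univ_two] at hps
      have hk0 := (hκ m).1 0
      have hk1 := (hκ m).1 1
      have hk2 := (hκ m).1 2
      have hks := (hκ m).2
      simp [Fin.sum_univ_three] at hks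
      rcases eq_or_lt_of_le hlampos with hl | hl
      · simp [← hl]
      rcases lt_or_ge (p m 1) (3/4) with hq | hq
      · have hk2z : κ m 2 = 0 := by
          by_contra hne
          have hpos : 0 < κ m 2 := lt_of_le_of_ne hk2 (Ne.symm hne)
          have := heqr m hl 2 hpos 0
          simp [uR_tt, Fin.sum_univ_two] at this
          nlinarith
        have hp0e : p m 0 = 1 - p m 1 := by linarith
        have hc : κ m 1 ≤ 1 + 4/3 * p m 1 := by nlinarith
        simp [uS_tt, Fin.sum_univ_two, Fin.sum_univ_three, hk2z, hp0e]
        nlinarith [mul_le_mul_of_nonneg_left hc hlampos]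
      · have hp0e : p m 0 = 1 - p m 1 := by linarith
        have hc : κ m 1 + κ m 2 * 2 ≤ 1 + 4/3 * p m 1 := by nlinarith
        simp [uS_tt, Fin.sum_univ_two, Fin.sum_univ_three, hp0e]
        nlinarith [mul_le_mul_of_nonneg_left hc hlampos]
    have hle : ∑ m : Fin 2, lam' m * ∑ ω, p m ω * ∑ a, κ m a * uS_tt ω a ≤
        ∑ m : Fin 2, lam' m * (1 + 4/3 * p m 1) :=
      Finset.sum_le_sum (fun m _ => key m)
    calc (payoffOf uS_tt lam' p κ, payoffOf uR_tt lam' p κ).1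
        = ∑ m : Fin 2, lam' m * ∑ ω, p m ω * ∑ a, κ m a * uS_tt ω a := rfl
      _ ≤ ∑ m : Fin 2, lam' m * (1 + 4/3 * p m 1) := hle
      _ ≤ 5/3 := by
          simp [Fin.sum_univ_two]
          nlinarith
end
end

section
/- Let π ∈ Δ(Ω), λ ∈ Δ(M), (p_m) ∈ Σ(π,λ), and let κ : M → Δ(A) satisfy (Eq-R). Define the induced outcome ν ∈ Δ(Ω × A) by ν(ω,a) = Σ_m λ(m)·p_m(ω)·κ(a∣m). Then ν has state marginal π (Σ_a ν(ω,a) = π(ω) for all ω) and ν is obedient: for all a, a' ∈ A, Σ_ω ν(ω,a)·(u_R(ω,a) − u_R(ω,a')) ≥ 0. -/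
open Finset

noncomputable section

/-- Let `π ∈ Δ(Ω)`, `lam ∈ Δ(M)`, `(p m) ∈ Σ(π, lam)`, and let
`κ` be a response rule satisfying (Eq-R). Then the induced outcome
`ν (ω, a) = ∑ m, lam m * p m ω * κ (a ∣ m)` is an element of `Δ(Ω × A)` with
state marginal `π`, and it is obedient:
`∑ ω, ν (ω, a) * (uR ω a - uR ω a') ≥ 0` for all `a, a'`. -/
theorem stmt19 {Ω M A : Type*} [Fintype Ω] [Nonempty Ω] [Fintype M] [Nonempty M]
    [Fintype A] [Nonempty A]
    (uS uR : Ω → A → ℝ) (π : Ω → ℝ) (lam : M → ℝ)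
    (hπ : π ∈ stdSimplex ℝ Ω) (hlam : lam ∈ stdSimplex ℝ M)
    (p : M → Ω → ℝ) (hp : BayesPlausible π lam p)
    (κ : M → A → ℝ) (hκ : ∀ m, κ m ∈ stdSimplex ℝ A)
    (heqr : EqR uR lam p κ) :
    (∀ ω a, 0 ≤ ∑ m, lam m * p m ω * κ m a) ∧
    (∑ ω, ∑ a, ∑ m, lam m * p m ω * κ m a = 1) ∧
    (∀ ω, ∑ a, ∑ m, lam m * p m ω * κ m a = π ω) ∧
    (∀ a a' : A, 0 ≤ ∑ ω, (∑ m, lam m * p m ω * κ m a) * (uR ω a - uR ω a')) := by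
  obtain ⟨hpb, hpm⟩ := hp
  have hmarg : ∀ ω, ∑ a, ∑ m, lam m * p m ω * κ m a = π ω := by
    intro ω
    rw [Finset.sum_comm]
    calc ∑ m, ∑ a, lam m * p m ω * κ m a
        = ∑ m, lam m * p m ω := by
          refine Finset.sum_congr rfl fun m _ => ?_
          rw [← Finset.mul_sum, (hκ m).2, mul_one]
      _ = π ω := hpm ω
  refine ⟨?_, ?_, hmarg, ?_⟩
  · intro ω a
    exact Finset.sum_nonneg fun m _ => mul_nonneg
      (mul_nonneg (hlam.1 m) ((hpb m).1 ω)) ((hκ m).1 a)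
  · simp only [hmarg]; exact hπ.2
  · intro a a'
    have key : ∑ ω, (∑ m, lam m * p m ω * κ m a) * (uR ω a - uR ω a')
        = ∑ m, lam m * κ m a * ∑ ω, p m ω * (uR ω a - uR ω a') := by
      simp_rw [Finset.sum_mul, Finset.mul_sum]
      rw [Finset.sum_comm]
      exact Finset.sum_congr rfl fun m _ => Finset.sum_congr rfl fun ω _ => by ring
    rw [key]
    refine Finset.sum_nonneg fun m _ => ?_
    rcases le_or_gt (lam m) 0 with h | h
    · have : lam m = 0 := le_antisymm h (hlam.1 m)
      simp [this]
    rcases le_or_gt (κ m a) 0 with h2 | h2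
    · have : κ m a = 0 := le_antisymm h2 ((hκ m).1 a)
      simp [this]
    have hast := heqr m h a h2
    have : 0 ≤ ∑ ω, p m ω * (uR ω a - uR ω a') := by
      have h3 := hast a'
      have : ∑ ω, p m ω * (uR ω a - uR ω a')
          = (∑ ω, p m ω * uR ω a) - ∑ ω, p m ω * uR ω a' := by
        rw [← Finset.sum_sub_distrib]
        exact Finset.sum_congr rfl fun ω _ => by ring
      rw [this]
      linarith
    exact mul_nonneg (mul_nonneg h.le h2.le) this
end
end
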